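/- F-Lagrange formulas: let Q = ∂_F ∘ P be a ∂_F-delta operator with P ∈ Σ_F invertible in Σ_F, and let (q_n)_{n≥0} be the ∂_F-basic polynomial sequence of Q. Then for every n ≥ 1: (1) q_n = Q' P^{−n−1} x^n, and (2) q_n = P^{−n} x^n − (F_n/n)·(P^{−n})' x^{n−1}, where ' denotes the Graves–Pincherle F-derivative and F_n/n ∈ K via the characteristic-zero embedding of the rationals. -/

import Mathlib

open Polynomial Finset

/-- F-factorial: `Ffact n = F_n · F_{n-1} ··· F_1`, with `Ffact 0 = 1`. -/
def Ffact (n : ℕ) : ℕ := ∏ i ∈ Finset.range n, Nat.fib (i + 1)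

/-- Fibonomial coefficient `C_F(n,k) = F_n!/(F_k!·F_{n−k}!)`, taken in a field `K`. -/
noncomputable def fibnom (K : Type*) [Field K] (n k : ℕ) : K :=
  (Ffact n : K) / ((Ffact k : K) * (Ffact (n - k) : K))

variable (K : Type*) [Field K] [CharZero K]

/-- The F-derivative `∂_F`, the linear operator with `∂_F x^n = F_n x^{n-1}`. -/
noncomputable def fderivF : Module.End K (Polynomial K) :=
  Polynomial.lsum fun n => (Nat.fib n : K) • (Polynomial.monomial (n - 1) : K →ₗ[K] Polynomial K)

/-- The F-translation operator `E^y(∂_F) = Σ_{k≥0} (y^k/F_k!) ∂_F^k`; since `∂_F`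
strictly decreases degree, the sum truncated at `natDegree p + 1` is the full sum. -/
noncomputable def Etrans (y : K) (p : Polynomial K) : Polynomial K :=
  ∑ k ∈ Finset.range (p.natDegree + 1), (y ^ k / (Ffact k : K)) • ((fderivF K ^ k) p)

/-- A linear operator on `K[x]` is `∂_F`-shift invariant iff it commutes with every
F-translation operator `E^y(∂_F)`. -/
def ShiftInv (T : Module.End K (Polynomial K)) : Prop :=
  ∀ (y : K) (p : Polynomial K), T (Etrans K y p) = Etrans K y (T p)

/-- A `∂_F`-delta operator: a `∂_F`-shift invariant operator `Q` with `Q x` a nonzero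
constant. -/
def DeltaOp (Q : Module.End K (Polynomial K)) : Prop :=
  ShiftInv K Q ∧ ∃ c : K, c ≠ 0 ∧ Q Polynomial.X = Polynomial.C c

/-- `(q_n)` is the `∂_F`-basic polynomial sequence of `Q`. -/
def BasicSeq (Q : Module.End K (Polynomial K)) (q : ℕ → Polynomial K) : Prop :=
  (∀ n : ℕ, (q n).degree = n) ∧ q 0 = 1 ∧ (∀ n : ℕ, 1 ≤ n → (q n).eval 0 = 0) ∧
    ∀ n : ℕ, 1 ≤ n → Q (q n) = (Nat.fib n : K) • q (n - 1)

/-- The operator `x̂_F`, with `x̂_F x^n = ((n+1)/F_{n+1}) x^{n+1}`. -/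
noncomputable def xF : Module.End K (Polynomial K) :=
  Polynomial.lsum fun n =>
    (((n : K) + 1) / (Nat.fib (n + 1) : K)) • (Polynomial.monomial (n + 1) : K →ₗ[K] Polynomial K)

/-- The Graves–Pincherle F-derivative `T' = T∘x̂_F − x̂_F∘T`. -/
noncomputable def GPderiv (T : Module.End K (Polynomial K)) : Module.End K (Polynomial K) :=
  T * xF K - xF K * T

/-- `T = Σ_{k≥0} (a_k/F_k!) Q^k`, expressed via truncations: since a delta operator `Q`
strictly decreases degree, `Q^k p = 0` for `k > natDegree p`, so the truncated sums agree. -/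
def OpSumRep (Q : Module.End K (Polynomial K)) (a : ℕ → K) (T : Module.End K (Polynomial K)) : Prop :=
  ∀ (p : Polynomial K) (N : ℕ), p.natDegree < N →
    T p = ∑ k ∈ Finset.range N, (a k / (Ffact k : K)) • ((Q ^ k) p)

/-- `(s_n)` is a sequence of Sheffer F-polynomials of `Q`. -/
def ShefferSeq (Q : Module.End K (Polynomial K)) (s : ℕ → Polynomial K) : Prop :=
  (∀ n : ℕ, (s n).degree = n) ∧ (∃ c : K, c ≠ 0 ∧ s 0 = Polynomial.C c) ∧
    ∀ n : ℕ, 1 ≤ n → Q (s n) = (Nat.fib n : K) • s (n - 1)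

set_option linter.unusedSectionVars false
set_option maxHeartbeats 1000000

section AuxBasic

lemma ffact_cast_ne_zero (n : ℕ) : (Ffact n : K) ≠ 0 := by
  have h : 0 < Ffact n := Finset.prod_pos fun i _ => Nat.fib_pos.2 (Nat.succ_pos i)
  exact_mod_cast h.ne'

lemma fib_cast_ne_zero {n : ℕ} (hn : 1 ≤ n) : (Nat.fib n : K) ≠ 0 := by
  have h : 0 < Nat.fib n := Nat.fib_pos.2 hn
  exact_mod_cast h.ne'

lemma fderivF_monomial (n : ℕ) (c : K) :
    fderivF K (monomial n c) = (Nat.fib n : K) • monomial (n - 1) c := by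
  rw [fderivF, Polynomial.lsum_apply, Polynomial.sum_monomial_index] <;> simp

lemma xF_monomial (n : ℕ) (c : K) :
    xF K (monomial n c) = (((n : K) + 1) / (Nat.fib (n + 1) : K)) • monomial (n + 1) c := by
  rw [xF, Polynomial.lsum_apply, Polynomial.sum_monomial_index] <;> simp

lemma fderivF_X_pow (n : ℕ) :
    fderivF K (X ^ n) = (Nat.fib n : K) • X ^ (n - 1) := by
  rw [X_pow_eq_monomial, fderivF_monomial, X_pow_eq_monomial]

lemma xF_X_pow (n : ℕ) :
    xF K (X ^ n) = (((n : K) + 1) / (Nat.fib (n + 1) : K)) • X ^ (n + 1) := by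
  rw [X_pow_eq_monomial, xF_monomial, X_pow_eq_monomial]

lemma fderivF_coeff (p : Polynomial K) (m : ℕ) :
    (fderivF K p).coeff m = (Nat.fib (m + 1) : K) * p.coeff (m + 1) := by
  induction p using Polynomial.induction_on' with
  | add p q hp hq => simp [map_add, hp, hq, mul_add]
  | monomial n c =>
    rw [fderivF_monomial]
    simp only [Polynomial.coeff_smul, Polynomial.coeff_monomial, smul_eq_mul]
    rcases n with _ | k
    · simp
    · simp only [Nat.succ_sub_one]
      by_cases h : k = m
      · subst h; simp
      · rw [if_neg h, if_neg (by omega)]; ring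

lemma fderivF_C (c : K) : fderivF K (C c) = 0 := by
  ext m
  rw [fderivF_coeff]
  simp

lemma fderivF_one : fderivF K (1 : Polynomial K) = 0 := by
  rw [← Polynomial.C_1]; exact fderivF_C K 1

lemma fderivF_natDegree_le (p : Polynomial K) :
    (fderivF K p).natDegree ≤ p.natDegree := by
  rw [Polynomial.natDegree_le_iff_coeff_eq_zero]
  intro m hm
  rw [fderivF_coeff]
  rw [Polynomial.coeff_eq_zero_of_natDegree_lt (by omega)]
  ring

lemma eq_C_of_fderivF_eq_zero {p : Polynomial K} (h : fderivF K p = 0) :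
    p = C (p.coeff 0) := by
  ext m
  rcases m with _ | k
  · simp
  · have := congrArg (fun q => Polynomial.coeff q k) h
    simp only [fderivF_coeff, Polynomial.coeff_zero] at this
    have hfib : (Nat.fib (k + 1) : K) ≠ 0 := fib_cast_ne_zero K (Nat.le_add_left 1 k)
    have : p.coeff (k + 1) = 0 := by
      rcases mul_eq_zero.1 this with h' | h'
      · exact absurd h' hfib
      · exact h'
    simp [this, Polynomial.coeff_C]

lemma fderivF_pow_X (k n : ℕ) :
    (fderivF K ^ k) (X ^ n : Polynomial K) =
      (∏ i ∈ Finset.range k, (Nat.fib (n - i) : K)) • X ^ (n - k) := by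
  induction k with
  | zero => simp
  | succ k ih =>
    rw [pow_succ', Module.End.mul_apply, ih, map_smul, fderivF_X_pow]
    rw [Finset.prod_range_succ, smul_smul, Nat.sub_sub]

lemma fderivF_pow_X_eq_zero {k n : ℕ} (h : n < k) :
    (fderivF K ^ k) (X ^ n : Polynomial K) = 0 := by
  rw [fderivF_pow_X]
  have : (∏ i ∈ Finset.range k, (Nat.fib (n - i) : K)) = 0 := by
    apply Finset.prod_eq_zero (Finset.mem_range.2 h)
    simp
  rw [this, zero_smul]

lemma fderivF_pow_eq_zero {p : Polynomial K} {k : ℕ} (h : p.natDegree < k) :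
    (fderivF K ^ k) p = 0 := by
  conv_lhs => rw [p.as_sum_support]
  rw [map_sum]
  apply Finset.sum_eq_zero
  intro i hi
  have hik : i < k := lt_of_le_of_lt (Polynomial.le_natDegree_of_mem_supp i hi) h
  rw [← Polynomial.smul_X_eq_monomial, map_smul, fderivF_pow_X_eq_zero K hik, smul_zero]

end AuxBasic
section AuxComm

lemma GPderiv_fderivF : GPderiv K (fderivF K) = 1 := by
  rw [GPderiv]
  apply Polynomial.lhom_ext'
  intro n
  ext c
  simp only [LinearMap.coe_comp, Function.comp_apply, LinearMap.sub_apply, Module.End.mul_apply,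
    Module.End.one_apply]
  rw [xF_monomial, map_smul, fderivF_monomial, fderivF_monomial, map_smul, xF_monomial]
  rcases n with _ | m
  · simp
  · have h1 : (Nat.fib (m + 1 + 1) : K) ≠ 0 := fib_cast_ne_zero K (by omega)
    have h2 : (Nat.fib (m + 1) : K) ≠ 0 := fib_cast_ne_zero K (by omega)
    simp only [Nat.add_sub_cancel, smul_smul]
    rw [div_mul_cancel₀ _ h1, mul_comm ((Nat.fib (m+1) : K)), div_mul_cancel₀ _ h2,
      ← sub_smul]
    have : ((m:K) + 1 + 1) - ((m:K) + 1) = 1 := by ring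
    push_cast
    rw [this, one_smul]

end AuxComm
section AuxShift

lemma xF_coeff_zero (p : Polynomial K) : (xF K p).coeff 0 = 0 := by
  rw [xF, Polynomial.lsum_apply, Polynomial.sum]
  rw [Polynomial.finset_sum_coeff]
  apply Finset.sum_eq_zero
  intro i _
  simp [Polynomial.coeff_smul, Polynomial.coeff_monomial]

lemma xF_eval_zero (p : Polynomial K) : (xF K p).eval 0 = 0 := by
  rw [← Polynomial.coeff_zero_eq_eval_zero, xF_coeff_zero]

lemma shiftInv_comm {T : Module.End K (Polynomial K)} (hT : ShiftInv K T) :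
    T * fderivF K = fderivF K * T := by
  apply LinearMap.ext
  intro p
  simp only [Module.End.mul_apply]
  set N := max p.natDegree (T p).natDegree + 2 with hN
  have hextend : ∀ (r : Polynomial K), r.natDegree < N →
      ∀ y : K, Etrans K y r = ∑ k ∈ Finset.range N, (y ^ k / (Ffact k : K)) • ((fderivF K ^ k) r) := by
    intro r hr y
    rw [Etrans]
    apply Finset.sum_subset
    · apply Finset.range_subset_range.2; omega
    · intro k _ hk
      rw [Finset.mem_range, not_lt] at hk
      rw [fderivF_pow_eq_zero K (by omega), smul_zero]
  -- the vanishing family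
  set w : ℕ → Polynomial K :=
    fun k => ((Ffact k : K))⁻¹ • (T ((fderivF K ^ k) p) - (fderivF K ^ k) (T p)) with hw
  have hvanish : ∀ y : K, ∑ k ∈ Finset.range N, y ^ k • w k = 0 := by
    intro y
    have h1 := hT y p
    rw [hextend p (by omega) y, hextend (T p) (by omega) y, map_sum] at h1
    simp only [map_smul] at h1
    have : ∑ k ∈ Finset.range N, y ^ k • w k =
        (∑ k ∈ Finset.range N, (y ^ k / (Ffact k : K)) • T ((fderivF K ^ k) p)) -
          ∑ k ∈ Finset.range N, (y ^ k / (Ffact k : K)) • ((fderivF K ^ k) (T p)) := by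
      rw [← Finset.sum_sub_distrib]
      apply Finset.sum_congr rfl
      intro k _
      rw [hw]
      simp only [smul_sub, smul_smul, div_eq_mul_inv]
    rw [this, h1, sub_self]
  -- extract coefficient k = 1
  have hw1 : w 1 = 0 := by
    ext m
    have hg : ∀ y : K, Polynomial.eval y (∑ k ∈ Finset.range N, C ((w k).coeff m) * X ^ k) = 0 := by
      intro y
      have := congrArg (fun q => Polynomial.coeff q m) (hvanish y)
      simp only [Polynomial.finset_sum_coeff, Polynomial.coeff_smul, smul_eq_mul,
        Polynomial.coeff_zero] at this
      rw [Polynomial.eval_finset_sum]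
      simp only [Polynomial.eval_mul, Polynomial.eval_C, Polynomial.eval_pow, Polynomial.eval_X]
      rw [Finset.sum_congr rfl (fun k _ => mul_comm ((w k).coeff m) (y ^ k))]
      exact this
    have hzero : (∑ k ∈ Finset.range N, C ((w k).coeff m) * X ^ k) = 0 :=
      Polynomial.funext fun y => by rw [hg y]; simp
    have := congrArg (fun q => Polynomial.coeff q 1) hzero
    simp only [Polynomial.finset_sum_coeff, Polynomial.coeff_zero] at this
    rw [Finset.sum_eq_single 1] at this
    · simpa using this
    · intro b _ hb
      simp [Polynomial.coeff_C_mul, Polynomial.coeff_X_pow, Ne.symm hb]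
    · intro h
      exact absurd (Finset.mem_range.2 (by omega)) h
  -- conclude
  have hFf : ((Ffact 1 : K))⁻¹ ≠ 0 := by
    simp only [ne_eq, inv_eq_zero]
    exact ffact_cast_ne_zero K 1
  rw [hw] at hw1
  simp only [smul_eq_zero, sub_eq_zero] at hw1
  rcases hw1 with h | h
  · exact absurd h hFf
  · simpa using h

end AuxShift
section AuxExpand

variable {T : Module.End K (Polynomial K)}

lemma cd_apply (hT : T * fderivF K = fderivF K * T) (p : Polynomial K) :
    T (fderivF K p) = fderivF K (T p) := by
  have := congrArg (fun S : Module.End K (Polynomial K) => S p) hT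
  simpa using this

lemma cd_pow_apply (hT : T * fderivF K = fderivF K * T) (k : ℕ) (p : Polynomial K) :
    T ((fderivF K ^ k) p) = (fderivF K ^ k) (T p) := by
  induction k with
  | zero => simp
  | succ k ih =>
    rw [pow_succ', Module.End.mul_apply, Module.End.mul_apply, ← ih, ← cd_apply K hT]

lemma expand_X (hT : T * fderivF K = fderivF K * T) (n : ℕ) :
    T (X ^ n) = ∑ k ∈ Finset.range (n + 1),
      (((T (X ^ k)).eval 0 / (Ffact k : K)) • ((fderivF K ^ k) (X ^ n : Polynomial K))) := by
  induction n with
  | zero =>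
    have hT1 : T (1 : Polynomial K) = C ((T (1 : Polynomial K)).coeff 0) := by
      apply eq_C_of_fderivF_eq_zero
      rw [← cd_apply K hT, fderivF_one, map_zero]
    simp only [pow_zero, zero_add, Finset.sum_range_one, Module.End.one_apply]
    rw [show (Ffact 0 : K) = 1 by norm_num [Ffact], div_one,
      ← Polynomial.coeff_zero_eq_eval_zero]
    nth_rw 1 [hT1]
    rw [Polynomial.smul_eq_C_mul, mul_one]
  | succ n ih =>
    set Δ : Polynomial K := T (X ^ (n+1)) -
      ∑ k ∈ Finset.range (n + 2),
        ((T (X ^ k)).eval 0 / (Ffact k : K)) • ((fderivF K ^ k) (X ^ (n+1) : Polynomial K)) with hΔ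
    have h1 : fderivF K (T (X ^ (n+1))) = (Nat.fib (n+1) : K) • T (X ^ n) := by
      rw [← cd_apply K hT, fderivF_X_pow, map_smul, Nat.add_sub_cancel]
    have h2 : ∀ k, fderivF K (((T (X ^ k)).eval 0 / (Ffact k : K)) •
        (fderivF K ^ k) (X ^ (n+1) : Polynomial K)) =
        ((T (X ^ k)).eval 0 / (Ffact k : K)) • (Nat.fib (n+1) : K) •
          ((fderivF K ^ k) (X ^ n : Polynomial K)) := by
      intro k
      rw [map_smul]
      congr 1
      rw [← Module.End.mul_apply, ← pow_succ', pow_succ, Module.End.mul_apply,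
        fderivF_X_pow, Nat.add_sub_cancel, map_smul]
    have h2' : fderivF K (∑ k ∈ Finset.range (n + 2),
        ((T (X ^ k)).eval 0 / (Ffact k : K)) • ((fderivF K ^ k) (X ^ (n+1) : Polynomial K))) =
        ∑ k ∈ Finset.range (n + 1), ((T (X ^ k)).eval 0 / (Ffact k : K)) •
          (Nat.fib (n+1) : K) • ((fderivF K ^ k) (X ^ n : Polynomial K)) := by
      rw [map_sum, Finset.sum_congr rfl (fun k _ => h2 k), Finset.sum_range_succ,
        fderivF_pow_X_eq_zero K (Nat.lt_succ_self n), smul_zero, smul_zero, add_zero]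
    have h3 : (Nat.fib (n+1) : K) • T (X ^ n) =
        ∑ k ∈ Finset.range (n + 1), ((T (X ^ k)).eval 0 / (Ffact k : K)) •
          (Nat.fib (n+1) : K) • ((fderivF K ^ k) (X ^ n : Polynomial K)) := by
      rw [ih, Finset.smul_sum]
      exact Finset.sum_congr rfl fun k _ => smul_comm _ _ _
    have hD : fderivF K Δ = 0 := by
      rw [hΔ, map_sub, h1, h2', h3, sub_self]
    have hΔC : Δ = C (Δ.coeff 0) := eq_C_of_fderivF_eq_zero K hD
    have hprod : (∏ i ∈ Finset.range (n+1), (Nat.fib (n + 1 - i) : K)) = (Ffact (n+1) : K) := by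
      unfold Ffact
      push_cast
      rw [← Finset.prod_range_reflect]
      apply Finset.prod_congr rfl
      intro i hi
      rw [Finset.mem_range] at hi
      congr 2
      omega
    have hΔ0 : Δ.coeff 0 = 0 := by
      rw [hΔ, Polynomial.coeff_sub, Polynomial.finset_sum_coeff]
      rw [Finset.sum_congr rfl (fun k _ => Polynomial.coeff_smul _ _ 0)]
      have hterm : ∀ k ∈ Finset.range (n + 2), k ≠ n + 1 →
          ((T (X ^ k)).eval 0 / (Ffact k : K)) •
            ((fderivF K ^ k) (X ^ (n+1) : Polynomial K)).coeff 0 = 0 := by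
        intro k hk hkne
        rw [Finset.mem_range] at hk
        rw [fderivF_pow_X, Polynomial.coeff_smul, Polynomial.coeff_X_pow]
        rw [if_neg (by omega)]
        simp
      rw [Finset.sum_eq_single_of_mem (n+1) (Finset.mem_range.2 (by omega))
        (fun k hk hkne => hterm k hk hkne)]
      rw [fderivF_pow_X, Nat.sub_self, pow_zero, Polynomial.coeff_smul]
      simp only [Polynomial.coeff_one, if_pos rfl, smul_eq_mul, mul_one, if_true]
      rw [hprod, div_mul_cancel₀ _ (ffact_cast_ne_zero K (n+1)),
        Polynomial.coeff_zero_eq_eval_zero, sub_self]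
    have hfin : Δ = 0 := by rw [hΔC, hΔ0, Polynomial.C_0]
    rw [hΔ, sub_eq_zero] at hfin
    exact hfin

lemma expand_apply (hT : T * fderivF K = fderivF K * T) (p : Polynomial K) {N : ℕ}
    (h : p.natDegree < N) :
    T p = ∑ k ∈ Finset.range N, ((T (X ^ k)).eval 0 / (Ffact k : K)) • ((fderivF K ^ k) p) := by
  have hX : ∀ n < N, T (X ^ n : Polynomial K) =
      ∑ k ∈ Finset.range N, ((T (X ^ k)).eval 0 / (Ffact k : K)) • ((fderivF K ^ k) (X ^ n : Polynomial K)) := by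
    intro n hn
    rw [expand_X K hT n]
    apply Finset.sum_subset
    · apply Finset.range_subset_range.2; omega
    · intro k _ hk
      rw [Finset.mem_range, not_lt] at hk
      rw [fderivF_pow_X_eq_zero K (by omega), smul_zero]
  conv_lhs => rw [p.as_sum_support, map_sum]
  have : ∀ i ∈ p.support, T (monomial i (p.coeff i)) =
      ∑ k ∈ Finset.range N, ((T (X ^ k)).eval 0 / (Ffact k : K)) •
        ((fderivF K ^ k) (monomial i (p.coeff i))) := by
    intro i hi
    have hiN : i < N := lt_of_le_of_lt (Polynomial.le_natDegree_of_mem_supp i hi) h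
    rw [← Polynomial.smul_X_eq_monomial, map_smul, hX i hiN, Finset.smul_sum]
    apply Finset.sum_congr rfl
    intro k _
    rw [map_smul, smul_comm]
  rw [Finset.sum_congr rfl this, Finset.sum_comm]
  apply Finset.sum_congr rfl
  intro k _
  rw [← Finset.smul_sum]
  congr 1
  rw [← map_sum]
  congr 1
  exact p.as_sum_support.symm

lemma fderivF_pow_natDegree_le (k : ℕ) (p : Polynomial K) :
    ((fderivF K ^ k) p).natDegree ≤ p.natDegree := by
  induction k with
  | zero => simp
  | succ k ih =>
    rw [pow_succ', Module.End.mul_apply]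
    exact le_trans (fderivF_natDegree_le K _) ih

lemma cd_natDegree_le (hT : T * fderivF K = fderivF K * T) (p : Polynomial K) :
    (T p).natDegree ≤ p.natDegree := by
  rw [expand_apply K hT p (Nat.lt_succ_self _)]
  apply Polynomial.natDegree_sum_le_of_forall_le
  intro k _
  exact le_trans (Polynomial.natDegree_smul_le _ _) (fderivF_pow_natDegree_le K k p)

lemma cd_comm {S : Module.End K (Polynomial K)}
    (hS : S * fderivF K = fderivF K * S) (hT : T * fderivF K = fderivF K * T) :
    S * T = T * S := by
  apply LinearMap.ext
  intro p
  simp only [Module.End.mul_apply]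
  rw [expand_apply K hT p (Nat.lt_succ_self _), map_sum]
  have h1 : ∀ k, S (((T (X ^ k)).eval 0 / (Ffact k : K)) • ((fderivF K ^ k) p)) =
      ((T (X ^ k)).eval 0 / (Ffact k : K)) • ((fderivF K ^ k) (S p)) := by
    intro k
    rw [map_smul, cd_pow_apply K hS]
  rw [Finset.sum_congr rfl (fun k _ => h1 k)]
  rw [← expand_apply K hT (S p) (Nat.lt_succ_of_le (cd_natDegree_le K hS p))]

end AuxExpand
section AuxGP

lemma GPderiv_one : GPderiv K 1 = 0 := by simp [GPderiv]

lemma GPderiv_mul (T S : Module.End K (Polynomial K)) :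
    GPderiv K (T * S) = GPderiv K T * S + T * GPderiv K S := by
  simp only [GPderiv, sub_mul, mul_sub, mul_assoc]
  abel

lemma cd_gp {T : Module.End K (Polynomial K)} (hT : T * fderivF K = fderivF K * T) :
    GPderiv K T * fderivF K = fderivF K * GPderiv K T := by
  have hxD : xF K * fderivF K = fderivF K * xF K - 1 := by
    have h := GPderiv_fderivF K
    rw [GPderiv, sub_eq_iff_eq_add] at h
    rw [h]
    abel
  calc (T * xF K - xF K * T) * fderivF K
      = T * (xF K * fderivF K) - xF K * (T * fderivF K) := by
        rw [sub_mul, mul_assoc, mul_assoc]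
    _ = T * (fderivF K * xF K - 1) - xF K * (fderivF K * T) := by rw [hxD, hT]
    _ = T * fderivF K * xF K - T - xF K * fderivF K * T := by
        rw [mul_sub, mul_one, mul_assoc, mul_assoc]
    _ = fderivF K * T * xF K - T - (fderivF K * xF K - 1) * T := by rw [hT, hxD]
    _ = fderivF K * (T * xF K) - T - (fderivF K * (xF K * T) - T) := by
        rw [sub_mul, one_mul, mul_assoc, mul_assoc]
    _ = fderivF K * (T * xF K - xF K * T) := by rw [mul_sub]; abel

lemma gp_pinv_pow (P Pinv : Module.End K (Polynomial K))
    (hPd : P * fderivF K = fderivF K * P) (hRd : Pinv * fderivF K = fderivF K * Pinv)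
    (h1 : P * Pinv = 1) (h2 : Pinv * P = 1) (n : ℕ) :
    GPderiv K (Pinv ^ n) = -((n : K) • (Pinv ^ (n + 1) * GPderiv K P)) := by
  have hP'd := cd_gp K hPd
  have hcomm : GPderiv K P * Pinv = Pinv * GPderiv K P := cd_comm K hP'd hRd
  have hzero : GPderiv K P * Pinv + P * GPderiv K Pinv = 0 := by
    have h := GPderiv_mul K P Pinv
    rw [h1, GPderiv_one] at h
    exact h.symm
  have hR' : GPderiv K Pinv = -(Pinv ^ 2 * GPderiv K P) := by
    have h3 : P * GPderiv K Pinv = -(GPderiv K P * Pinv) := by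
      rw [eq_neg_iff_add_eq_zero, add_comm]
      exact hzero
    have h4 := congrArg (fun S => Pinv * S) h3
    simp only [mul_neg (α := Module.End K (Polynomial K))] at h4
    rw [← mul_assoc, h2, one_mul] at h4
    rw [h4, hcomm, ← mul_assoc, ← sq]
  induction n with
  | zero => simp [GPderiv_one]
  | succ n ih =>
    rw [pow_succ, GPderiv_mul, ih, hR']
    push_cast
    rw [neg_mul (α := Module.End K (Polynomial K)), smul_mul_assoc, mul_assoc, hcomm,
      ← mul_assoc, ← pow_succ, mul_neg (α := Module.End K (Polynomial K)),
      ← mul_assoc, ← pow_add, ← neg_add, add_smul, one_smul,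
      show n + 1 + 1 = n + 2 from rfl]

end AuxGP
/-- F-Lagrange formulas: for `Q = ∂_F ∘ P` with basic sequence `(q_n)`,
(1) `q_n = Q' P^{−n−1} x^n` and (2) `q_n = P^{−n} x^n − (F_n/n)·(P^{−n})' x^{n−1}`. -/
theorem f_lagrange (P Pinv : Module.End K (Polynomial K))
    (hP : ShiftInv K P) (hPinv : ShiftInv K Pinv)
    (hinv : P * Pinv = 1 ∧ Pinv * P = 1)
    (hQ : DeltaOp K (fderivF K * P))
    (q : ℕ → Polynomial K) (hq : BasicSeq K (fderivF K * P) q) :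
    ∀ n : ℕ, 1 ≤ n →
      q n = GPderiv K (fderivF K * P) ((Pinv ^ (n + 1)) (Polynomial.X ^ n)) ∧
      q n = (Pinv ^ n) (Polynomial.X ^ n) -
        ((Nat.fib n : K) / (n : K)) • (GPderiv K (Pinv ^ n)) (Polynomial.X ^ (n - 1)) := by
  obtain ⟨hdeg, hq0, heval0, hrec⟩ := hq
  obtain ⟨hPR, hRP⟩ := hinv
  have hPd : P * fderivF K = fderivF K * P := shiftInv_comm K hP
  have hRd : Pinv * fderivF K = fderivF K * Pinv := shiftInv_comm K hPinv
  have hQd : (fderivF K * P) * fderivF K = fderivF K * (fderivF K * P) := by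
    rw [mul_assoc, hPd, ← mul_assoc]
  have hQ'd := cd_gp K hQd
  have hP'd := cd_gp K hPd
  have hRpowd : ∀ m : ℕ, Pinv ^ m * fderivF K = fderivF K * Pinv ^ m :=
    fun m => Commute.pow_left hRd m
  have hRnd : ∀ m : ℕ, GPderiv K (Pinv ^ m) * fderivF K = fderivF K * GPderiv K (Pinv ^ m) :=
    fun m => cd_gp K (hRpowd m)
  have hPRpow : ∀ m : ℕ, P * Pinv ^ (m + 1) = Pinv ^ m := by
    intro m
    rw [pow_succ', ← mul_assoc, hPR, one_mul]
  -- kernel lemma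
  have hker : ∀ r : Polynomial K, (fderivF K * P) r = 0 → r.eval 0 = 0 → r = 0 := by
    intro r h0 hev
    have h1 : fderivF K (P r) = 0 := by
      rw [← Module.End.mul_apply]; exact h0
    have h2 : P r = C ((P r).coeff 0) := eq_C_of_fderivF_eq_zero K h1
    have h3 : r = Pinv (C ((P r).coeff 0)) := by
      rw [← h2, ← Module.End.mul_apply, hRP, Module.End.one_apply]
    have h4 : r.natDegree ≤ 0 := by
      rw [h3]
      exact le_trans (cd_natDegree_le K hRd _) (by simp)
    have h5 : r = C (r.coeff 0) := Polynomial.eq_C_of_natDegree_le_zero h4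
    rw [Polynomial.coeff_zero_eq_eval_zero, hev, Polynomial.C_0] at h5
    exact h5
  -- Q' = P + D * P'
  have hQ' : GPderiv K (fderivF K * P) = P + fderivF K * GPderiv K P := by
    rw [GPderiv_mul, GPderiv_fderivF, one_mul]
  have hgp := gp_pinv_pow K P Pinv hPd hRd hPR hRP
  -- step A operator identity
  have opA : ∀ n : ℕ, 1 ≤ n → GPderiv K (fderivF K * P) * Pinv ^ (n + 1) =
      Pinv ^ n + (-(n : K)⁻¹) • (fderivF K * GPderiv K (Pinv ^ n)) := by
    intro n hn
    have hcast : (n : K) ≠ 0 := Nat.cast_ne_zero.2 (by omega)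
    have hstep : Pinv ^ (n + 1) * GPderiv K P = (-(n : K)⁻¹) • GPderiv K (Pinv ^ n) := by
      rw [hgp n, smul_neg, neg_smul, neg_neg, smul_smul, inv_mul_cancel₀ hcast, one_smul]
    rw [hQ', add_mul, hPRpow n, mul_assoc, cd_comm K hP'd (hRpowd (n + 1)), hstep,
      mul_smul_comm]
  -- applied identity
  have pnA : ∀ n : ℕ, 1 ≤ n → (GPderiv K (fderivF K * P) * Pinv ^ (n + 1)) (X ^ n) =
      (Pinv ^ n) (X ^ n) -
        ((Nat.fib n : K) / (n : K)) • (GPderiv K (Pinv ^ n)) (X ^ (n - 1)) := by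
    intro n hn
    have hcast : (n : K) ≠ 0 := Nat.cast_ne_zero.2 (by omega)
    rw [opA n hn, ← hRnd n]
    rw [LinearMap.add_apply, LinearMap.smul_apply, Module.End.mul_apply, fderivF_X_pow,
      map_smul, smul_smul]
    rw [show (-(n : K)⁻¹) * (Nat.fib n : K) = -((Nat.fib n : K) / (n : K)) by
      rw [div_eq_mul_inv]; ring]
    rw [neg_smul, ← sub_eq_add_neg]
  -- eval-zero of the candidate
  have pn0 : ∀ n : ℕ, 1 ≤ n →
      ((GPderiv K (fderivF K * P) * Pinv ^ (n + 1)) (X ^ n)).eval 0 = 0 := by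
    intro n hn
    have hf := fib_cast_ne_zero (K := K) hn
    have hcast : (n : K) ≠ 0 := Nat.cast_ne_zero.2 (by omega)
    rw [pnA n hn]
    have hxap : (GPderiv K (Pinv ^ n)) (X ^ (n - 1) : Polynomial K) =
        (Pinv ^ n) (xF K (X ^ (n - 1))) - xF K ((Pinv ^ n) (X ^ (n - 1))) := by
      rw [GPderiv, LinearMap.sub_apply, Module.End.mul_apply, Module.End.mul_apply]
    have hn1 : (n - 1) + 1 = n := by omega
    have hcastn : ((n - 1 : ℕ) : K) + 1 = (n : K) := by
      have h' : ((n - 1 : ℕ) : K) = (n : K) - 1 := by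
        rw [Nat.cast_sub hn, Nat.cast_one]
      rw [h']; ring
    rw [hxap, xF_X_pow, hn1, hcastn, map_smul]
    simp only [Polynomial.eval_sub, Polynomial.eval_smul, smul_eq_mul, xF_eval_zero]
    field_simp
    ring
  -- main formula (1) via induction
  have main : ∀ n : ℕ, 1 ≤ n →
      q n = (GPderiv K (fderivF K * P) * Pinv ^ (n + 1)) (X ^ n) := by
    intro n hn
    induction n, hn using Nat.le_induction with
    | base =>
      have hrec1 := hrec 1 le_rfl
      rw [show (1 : ℕ) - 1 = 0 from rfl, hq0, Nat.fib_one, Nat.cast_one, one_smul] at hrec1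
      have hinner1 : (fderivF K * P) * Pinv ^ (1 + 1) = Pinv ^ 1 * fderivF K := by
        rw [mul_assoc, hPRpow 1]
        exact (hRpowd 1).symm
      have hop : (fderivF K * P) * (GPderiv K (fderivF K * P) * Pinv ^ (1 + 1)) =
          (GPderiv K (fderivF K * P) * Pinv ^ 1) * fderivF K := by
        rw [← mul_assoc, cd_comm K hQd hQ'd, mul_assoc, hinner1, ← mul_assoc]
      have hDX : fderivF K (X ^ 1 : Polynomial K) = 1 := by
        rw [fderivF_X_pow]
        simp
      have hR1 : (Pinv ^ 1) (1 : Polynomial K) = C (((Pinv ^ 1) (1 : Polynomial K)).coeff 0) := by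
        apply Polynomial.eq_C_of_natDegree_le_zero
        exact le_trans (cd_natDegree_le K (hRpowd 1) _) (by simp)
      have hQ'C : ∀ c : K, GPderiv K (fderivF K * P) (C c) = P (C c) := by
        intro c
        rw [hQ', LinearMap.add_apply, Module.End.mul_apply]
        have h6 : GPderiv K P (C c) = C ((GPderiv K P (C c)).coeff 0) := by
          apply Polynomial.eq_C_of_natDegree_le_zero
          exact le_trans (cd_natDegree_le K hP'd _) (by simp)
        rw [h6, fderivF_C, add_zero]
      have hPinv1 : P ((Pinv ^ 1) (1 : Polynomial K)) = 1 := by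
        rw [pow_one, ← Module.End.mul_apply, hPR, Module.End.one_apply]
      have hQp1 : (fderivF K * P)
          ((GPderiv K (fderivF K * P) * Pinv ^ (1 + 1)) (X ^ 1)) = 1 := by
        rw [← Module.End.mul_apply, hop]
        rw [Module.End.mul_apply, hDX, Module.End.mul_apply]
        rw [hR1, hQ'C, ← hR1, hPinv1]
      have hdiff : q 1 - (GPderiv K (fderivF K * P) * Pinv ^ (1 + 1)) (X ^ 1) = 0 := by
        apply hker
        · rw [map_sub, hrec1, hQp1, sub_self]
        · rw [Polynomial.eval_sub, heval0 1 le_rfl, pn0 1 le_rfl, sub_self]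
      rw [sub_eq_zero] at hdiff
      exact hdiff
    | succ n hn ih =>
      have hrecS := hrec (n + 1) (by omega)
      rw [Nat.add_sub_cancel] at hrecS
      have hinner2 : (fderivF K * P) * Pinv ^ (n + 1 + 1) = Pinv ^ (n + 1) * fderivF K := by
        rw [mul_assoc, hPRpow (n + 1)]
        exact (hRpowd (n + 1)).symm
      have hop2 : (fderivF K * P) * (GPderiv K (fderivF K * P) * Pinv ^ (n + 1 + 1)) =
          (GPderiv K (fderivF K * P) * Pinv ^ (n + 1)) * fderivF K := by
        rw [← mul_assoc, cd_comm K hQd hQ'd, mul_assoc, hinner2, ← mul_assoc]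
      have hQpS : (fderivF K * P)
          ((GPderiv K (fderivF K * P) * Pinv ^ (n + 1 + 1)) (X ^ (n + 1))) =
          (Nat.fib (n + 1) : K) •
            ((GPderiv K (fderivF K * P) * Pinv ^ (n + 1)) (X ^ n)) := by
        rw [← Module.End.mul_apply, hop2, Module.End.mul_apply, fderivF_X_pow,
          Nat.add_sub_cancel, map_smul]
      have hdiff : q (n + 1) -
          (GPderiv K (fderivF K * P) * Pinv ^ (n + 1 + 1)) (X ^ (n + 1)) = 0 := by
        apply hker
        · rw [map_sub, hrecS, hQpS, ih, sub_self]
        · rw [Polynomial.eval_sub, heval0 (n + 1) (by omega), pn0 (n + 1) (by omega), sub_self]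
      rw [sub_eq_zero] at hdiff
      exact hdiff
  intro n hn
  constructor
  · rw [main n hn, Module.End.mul_apply]
  · rw [main n hn, pnA n hn]
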